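/- Let H ∈ (0,1/2), T > 0 and γ ∈ (0,H). Then there exists a constant C_{H,T} > 0, depending only on H and T (and γ), such that for all 0 < t_0′ < t_0 < t ≤ T, K_H(t,t_0) − K_H(t,t_0′) ≤ C_{H,T} ((t_0 − t_0′)^γ / (t_0 t_0′)^γ) · t_0^{H − 1/2 − γ} (t − t_0)^{H − 1/2 − γ}. -/

import Mathlib

/-!
Write `a = H - 1/2 ∈ (-1/2, 0)`, so that
`K_H(t,s) = c_H (t^a s^(-a) (t-s)^a - a s^(-a) ∫_s^t u^(a-1) (u-s)^a du)`.
The increment in `s` splits into differences of powers, each controlled by the elementary bound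
`x^a - y^a ≤ (y-x)^γ x^(a-γ)` for `0 < x ≤ y`, and a difference of the integrals, controlled by the
same bound under the integral sign. The integrals `∫_s^t u^(a-1) (u-s)^c du` that remain are
`O(s^(a+c))` uniformly in `t`, by splitting at `2s`. Each resulting term is a monomial in `s`, `s'`,
`t - s` whose exponents dominate those of the target, and the surplus is absorbed by a power of `T`.
-/

open MeasureTheory Real Filter Set
open scoped ENNReal NNReal BigOperators Classical

noncomputable section

/-- Euler Beta function `B(a,b) = Γ(a)Γ(b)/Γ(a+b)`. -/
def eulerBeta (a b : ℝ) : ℝ := Real.Gamma a * Real.Gamma b / Real.Gamma (a + b)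

/-- Normalizing constant `c_H` of the fractional Brownian kernel. -/
def cH (H : ℝ) : ℝ := Real.sqrt (2 * H / ((1 - 2 * H) * eulerBeta (1 - 2 * H) (H + 1 / 2)))

/-- The fractional Brownian kernel `K_H(t,s)`. -/
def KH (H t s : ℝ) : ℝ :=
  cH H * ((t / s) ^ (H - 1 / 2) * (t - s) ^ (H - 1 / 2)
    + (1 / 2 - H) * s ^ (1 / 2 - H) * ∫ u in Set.Ioo s t, u ^ (H - 3 / 2) * (u - s) ^ (H - 1 / 2))

lemma one_sub_rpow_le_sub_one_rpow {u a γ : ℝ} (hu : 1 ≤ u) (ha : -1 ≤ a) (hγ₀ : 0 ≤ γ)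
    (hγ₁ : γ ≤ 1) : 1 - u ^ a ≤ (u - 1) ^ γ := by
  rcases le_total 1 (u - 1) with h | h
  · linarith [one_le_rpow h hγ₀, rpow_nonneg (zero_le_one.trans hu) a]
  calc 1 - u ^ a ≤ 1 - u ^ (-1 : ℝ) := by gcongr
    _ = (u - 1) / u := by rw [rpow_neg_one]; field_simp
    _ ≤ u - 1 := div_le_self (by linarith) hu
    _ ≤ (u - 1) ^ γ := self_le_rpow_of_le_one (by linarith) h hγ₁

lemma rpow_sub_rpow_le_of_neg_one_le {x y a γ : ℝ} (hx : 0 < x) (hxy : x ≤ y) (ha : -1 ≤ a)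
    (hγ₀ : 0 ≤ γ) (hγ₁ : γ ≤ 1) : x ^ a - y ^ a ≤ (y - x) ^ γ * x ^ (a - γ) := by
  have hy : 0 < y := hx.trans_le hxy
  calc x ^ a - y ^ a = x ^ a * (1 - (y / x) ^ a) := by
        rw [div_rpow hy.le hx.le]; field_simp
    _ ≤ x ^ a * (y / x - 1) ^ γ := by
        gcongr
        exact one_sub_rpow_le_sub_one_rpow ((one_le_div hx).mpr hxy) ha hγ₀ hγ₁
    _ = (y - x) ^ γ * x ^ (a - γ) := by
        rw [show y / x - 1 = (y - x) / x by field_simp, div_rpow (by linarith) hx.le,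
          rpow_sub hx]
        ring

lemma rpow_sub_rpow_le_of_le_one {x y b γ : ℝ} (hx : 0 < x) (hxy : x ≤ y) (hb : b ≤ 1)
    (hγ₀ : 0 ≤ γ) (hγ₁ : γ ≤ 1) : y ^ b - x ^ b ≤ (y - x) ^ γ * y ^ b * x ^ (-γ) := by
  have hy : 0 < y := hx.trans_le hxy
  have hxb : x ^ b * x ^ (-b) = 1 := by rw [← rpow_add hx, add_neg_cancel, rpow_zero]
  have hyb : y ^ b * y ^ (-b) = 1 := by rw [← rpow_add hy, add_neg_cancel, rpow_zero]
  calc y ^ b - x ^ b = y ^ b * x ^ b * (x ^ (-b) - y ^ (-b)) := by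
        linear_combination x ^ b * hyb - y ^ b * hxb
    _ ≤ y ^ b * x ^ b * ((y - x) ^ γ * x ^ (-b - γ)) := by
        gcongr
        exact rpow_sub_rpow_le_of_neg_one_le hx hxy (by linarith) hγ₀ hγ₁
    _ = (y - x) ^ γ * y ^ b * x ^ (-γ) := by
        rw [show -b - γ = -b + -γ by ring, rpow_add hx]
        linear_combination (y - x) ^ γ * y ^ b * x ^ (-γ) * hxb

lemma rpow_le_rpow_sub_mul_rpow {x T e f : ℝ} (hx : 0 < x) (hxT : x ≤ T) (hfe : f ≤ e) :
    x ^ e ≤ T ^ (e - f) * x ^ f := by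
  rw [← sub_add_cancel e f, rpow_add hx, add_sub_cancel_right]
  gcongr

lemma rpow_mul_rpow_mul_rpow_le {x y z T e₁ e₂ e₃ f₁ f₂ f₃ k : ℝ} (hx : 0 < x) (hy : 0 < y)
    (hz : 0 < z) (hxT : x ≤ T) (hyT : y ≤ T) (hzT : z ≤ T) (h₁ : f₁ ≤ e₁) (h₂ : f₂ ≤ e₂)
    (h₃ : f₃ ≤ e₃) (hk : (e₁ - f₁) + (e₂ - f₂) + (e₃ - f₃) = k) :
    x ^ e₁ * y ^ e₂ * z ^ e₃ ≤ T ^ k * (x ^ f₁ * y ^ f₂ * z ^ f₃) := by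
  have hT : 0 < T := hx.trans_le hxT
  calc x ^ e₁ * y ^ e₂ * z ^ e₃
      ≤ (T ^ (e₁ - f₁) * x ^ f₁) * (T ^ (e₂ - f₂) * y ^ f₂) * (T ^ (e₃ - f₃) * z ^ f₃) := by
        gcongr ?_ * ?_ * ?_ <;> apply rpow_le_rpow_sub_mul_rpow <;> assumption
    _ = T ^ k * (x ^ f₁ * y ^ f₂ * z ^ f₃) := by
        rw [← hk, rpow_add hT, rpow_add hT]; ring

section KernelIntegral

open intervalIntegral

variable {a c σ t : ℝ}

lemma intervalIntegrable_rpow_mul_rpow_sub (hσ : 0 < σ) (hσt : σ ≤ t) (hc : -1 < c) :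
    IntervalIntegrable (fun u => u ^ (a - 1) * (u - σ) ^ c) volume σ t := by
  have hsub : IntervalIntegrable (fun u => (u - σ) ^ c) volume σ t := by
    simpa using (intervalIntegrable_rpow' (a := 0) (b := t - σ) hc).comp_sub_right σ
  refine hsub.continuousOn_mul (ContinuousOn.rpow_const continuousOn_id fun u hu => ?_)
  rw [uIcc_of_le hσt] at hu
  exact Or.inl (hσ.trans_le hu.1).ne'

lemma integral_rpow_mul_rpow_sub_nonneg (hσ : 0 < σ) (hσt : σ ≤ t) :
    0 ≤ ∫ u in σ..t, u ^ (a - 1) * (u - σ) ^ c :=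
  integral_nonneg hσt fun _ hu =>
    mul_nonneg (rpow_nonneg (hσ.le.trans hu.1) _) (rpow_nonneg (sub_nonneg.2 hu.1) _)

lemma integral_rpow_mul_rpow_sub_le_of_le_one (hσ : 0 < σ) (hσt : σ ≤ t) (ha : a ≤ 1)
    (hc : -1 < c) :
    ∫ u in σ..t, u ^ (a - 1) * (u - σ) ^ c ≤ σ ^ (a - 1) * ((t - σ) ^ (c + 1) / (c + 1)) := by
  have hsub : ∫ u in σ..t, (u - σ) ^ c = (t - σ) ^ (c + 1) / (c + 1) := by
    rw [integral_comp_sub_right (fun u => u ^ c), sub_self, integral_rpow (Or.inl hc),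
      zero_rpow (by linarith), sub_zero]
  rw [← hsub, ← intervalIntegral.integral_const_mul]
  refine integral_mono_on hσt (intervalIntegrable_rpow_mul_rpow_sub hσ hσt hc) ?_ fun u hu => ?_
  · simpa using ((intervalIntegrable_rpow' (a := 0) (b := t - σ) hc).comp_sub_right σ).const_mul
      (σ ^ (a - 1))
  · exact mul_le_mul_of_nonneg_right (rpow_le_rpow_of_nonpos hσ hu.1 (by linarith))
      (rpow_nonneg (sub_nonneg.2 hu.1) _)

lemma integral_rpow_mul_rpow_sub_le_of_two_mul_le (hσ : 0 < σ) (hσt : 2 * σ ≤ t) (ha : a < 0)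
    (hc : c ≤ 0) :
    ∫ u in (2 * σ)..t, u ^ (a - 1) * (u - σ) ^ c ≤ -1 / a * σ ^ (a + c) := by
  have h2σ : 0 < 2 * σ := by linarith
  have hle : ∀ u ∈ uIcc (2 * σ) t, 2 * σ ≤ u := fun u hu => (uIcc_of_le hσt ▸ hu).1
  have hpos : ∀ u ∈ uIcc (2 * σ) t, 0 < u := fun u hu => h2σ.trans_le (hle u hu)
  have hint : ∫ u in (2 * σ)..t, u ^ (a - 1) = ((2 * σ) ^ a - t ^ a) / -a := by
    rw [integral_rpow (Or.inr ⟨by linarith, fun h => (hpos 0 h).ne' rfl⟩), sub_add_cancel,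
      div_neg, ← neg_div, neg_sub]
  have hrpow : IntervalIntegrable (fun u => u ^ (a - 1)) volume (2 * σ) t :=
    intervalIntegrable_rpow (Or.inr fun h => (hpos 0 h).ne' rfl)
  calc ∫ u in (2 * σ)..t, u ^ (a - 1) * (u - σ) ^ c
      ≤ ∫ u in (2 * σ)..t, u ^ (a - 1) * σ ^ c := by
        refine integral_mono_on hσt ?_ (hrpow.mul_const _) fun u hu => ?_
        · refine ContinuousOn.intervalIntegrable (ContinuousOn.mul ?_ ?_)
          · exact continuousOn_id.rpow_const fun u hu => Or.inl (hpos u hu).ne'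
          · exact (continuousOn_id.sub continuousOn_const).rpow_const fun u hu =>
              Or.inl (show 0 < u - σ by linarith [hle u hu]).ne'
        · exact mul_le_mul_of_nonneg_left (rpow_le_rpow_of_nonpos hσ (by linarith [hu.1]) hc)
            (rpow_nonneg (h2σ.le.trans hu.1) _)
    _ = ((2 * σ) ^ a - t ^ a) / -a * σ ^ c := by
        rw [intervalIntegral.integral_mul_const, hint]
    _ ≤ σ ^ a / -a * σ ^ c := by
        gcongr
        · linarith
        · linarith [rpow_nonneg (h2σ.le.trans hσt) a,
            rpow_le_rpow_of_nonpos hσ (by linarith : σ ≤ 2 * σ) ha.le]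
    _ = -1 / a * σ ^ (a + c) := by rw [rpow_add hσ]; field_simp

lemma integral_rpow_mul_rpow_sub_le (hσ : 0 < σ) (hσt : σ ≤ t) (ha : a < 0) (hc₁ : -1 < c)
    (hc₀ : c ≤ 0) :
    ∫ u in σ..t, u ^ (a - 1) * (u - σ) ^ c ≤ (1 / (c + 1) - 1 / a) * σ ^ (a + c) := by
  -- The integrand is nonnegative, so we may enlarge `t` until the split point `2σ` lies inside.
  set t' := max t (2 * σ)
  have hσ2σ : σ ≤ 2 * σ := by linarith
  have hσt' : σ ≤ t' := hσt.trans (le_max_left _ _)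
  have hint := intervalIntegrable_rpow_mul_rpow_sub (a := a) hσ hσt' hc₁
  have hmid : 2 * σ ∈ uIcc σ t' := by
    rw [uIcc_of_le hσt']
    exact ⟨hσ2σ, le_max_right _ _⟩
  have hsplit := integral_add_adjacent_intervals (hint.mono_set (uIcc_subset_uIcc_left hmid))
    (hint.mono_set (uIcc_subset_uIcc hmid right_mem_uIcc))
  calc ∫ u in σ..t, u ^ (a - 1) * (u - σ) ^ c
      ≤ ∫ u in σ..t', u ^ (a - 1) * (u - σ) ^ c := by
        refine integral_mono_interval le_rfl hσt (le_max_left _ _) ?_ hint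
        exact ae_restrict_of_forall_mem measurableSet_Ioc fun u hu =>
          mul_nonneg (rpow_nonneg (hσ.trans hu.1).le _) (rpow_nonneg (sub_nonneg.2 hu.1.le) _)
    _ = (∫ u in σ..(2 * σ), u ^ (a - 1) * (u - σ) ^ c)
          + ∫ u in (2 * σ)..t', u ^ (a - 1) * (u - σ) ^ c := hsplit.symm
    _ ≤ σ ^ (a - 1) * ((2 * σ - σ) ^ (c + 1) / (c + 1)) + -1 / a * σ ^ (a + c) :=
        add_le_add (integral_rpow_mul_rpow_sub_le_of_le_one hσ hσ2σ (by linarith) hc₁)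
          (integral_rpow_mul_rpow_sub_le_of_two_mul_le hσ (le_max_right _ _) ha hc₀)
    _ = (1 / (c + 1) - 1 / a) * σ ^ (a + c) := by
        have hpow : σ ^ (a - 1) * σ ^ (c + 1) = σ ^ (a + c) := by rw [← rpow_add hσ]; ring_nf
        rw [show 2 * σ - σ = σ by ring, ← hpow]
        ring

end KernelIntegral

def KHcore (a t s : ℝ) : ℝ :=
  t ^ a * s ^ (-a) * (t - s) ^ a - a * s ^ (-a) * ∫ u in s..t, u ^ (a - 1) * (u - s) ^ a

lemma KH_eq_cH_mul_KHcore {H t s : ℝ} (hs : 0 < s) (hst : s < t) :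
    KH H t s = cH H * KHcore (H - 1 / 2) t s := by
  rw [KH, KHcore, ← integral_Ioc_eq_integral_Ioo, ← intervalIntegral.integral_of_le hst.le,
    div_rpow (hs.trans hst).le hs.le, div_eq_mul_inv, ← rpow_neg hs.le,
    show H - 3 / 2 = H - 1 / 2 - 1 by ring, show 1 / 2 - H = -(H - 1 / 2) by ring]
  ring

section Increment

open intervalIntegral

variable {a γ s' s t T : ℝ}

lemma integral_rpow_mul_rpow_sub_sub_le (hs' : 0 < s') (hs's : s' < s) (hst : s < t)
    (hγ₀ : 0 ≤ γ) (hγ₁ : γ ≤ 1) (haγ : -1 < a - γ) :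
    (∫ u in s..t, u ^ (a - 1) * (u - s) ^ a) - ∫ u in s'..t, u ^ (a - 1) * (u - s') ^ a
      ≤ (s - s') ^ γ * ∫ u in s..t, u ^ (a - 1) * (u - s) ^ (a - γ) := by
  have hs : 0 < s := hs'.trans hs's
  have ha' : -1 < a := by linarith
  have hint' := intervalIntegrable_rpow_mul_rpow_sub (a := a) hs' (hs's.trans hst).le ha'
  have hmid : s ∈ uIcc s' t := by
    rw [uIcc_of_le (hs's.trans hst).le]
    exact ⟨hs's.le, hst.le⟩
  have hint's := hint'.mono_set (uIcc_subset_uIcc hmid right_mem_uIcc)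
  have hsplit := integral_add_adjacent_intervals (hint'.mono_set (uIcc_subset_uIcc_left hmid))
    hint's
  have hhead := integral_rpow_mul_rpow_sub_nonneg (a := a) (c := a) hs' hs's.le
  have hpointwise : (∫ u in s..t, u ^ (a - 1) * (u - s) ^ a - u ^ (a - 1) * (u - s') ^ a)
      ≤ ∫ u in s..t, (s - s') ^ γ * (u ^ (a - 1) * (u - s) ^ (a - γ)) := by
    refine integral_mono_on_of_le_Ioo hst.le
      ((intervalIntegrable_rpow_mul_rpow_sub hs hst.le ha').sub hint's)
      ((intervalIntegrable_rpow_mul_rpow_sub hs hst.le haγ).const_mul _) fun u hu => ?_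
    have hdiff := rpow_sub_rpow_le_of_neg_one_le (sub_pos.2 hu.1)
      (sub_le_sub_left hs's.le u) ha'.le hγ₀ hγ₁
    rw [sub_sub_sub_cancel_left] at hdiff
    calc u ^ (a - 1) * (u - s) ^ a - u ^ (a - 1) * (u - s') ^ a
        = u ^ (a - 1) * ((u - s) ^ a - (u - s') ^ a) := by ring
      _ ≤ u ^ (a - 1) * ((s - s') ^ γ * (u - s) ^ (a - γ)) :=
          mul_le_mul_of_nonneg_left hdiff (rpow_nonneg (hs.trans hu.1).le _)
      _ = (s - s') ^ γ * (u ^ (a - 1) * (u - s) ^ (a - γ)) := by ring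
  rw [integral_sub (intervalIntegrable_rpow_mul_rpow_sub hs hst.le ha') hint's,
    intervalIntegral.integral_const_mul] at hpointwise
  linarith

lemma KHcore_boundary_sub_le (hs' : 0 < s') (hs's : s' < s) (hst : s < t) (ha₁ : -1 ≤ a)
    (ha₀ : a ≤ 0) (hγ₀ : 0 ≤ γ) (hγ₁ : γ ≤ 1) :
    t ^ a * s ^ (-a) * (t - s) ^ a - t ^ a * s' ^ (-a) * (t - s') ^ a
      ≤ (s - s') ^ γ * ((t - s) ^ (a - γ) + s' ^ (-γ) * (t - s) ^ a) := by
  have hs : 0 < s := hs'.trans hs's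
  have hts : 0 < t - s := sub_pos.2 hst
  have hsa : s ^ a * s ^ (-a) = 1 := by rw [← rpow_add hs, add_neg_cancel, rpow_zero]
  have hta : t ^ a ≤ s ^ a := rpow_le_rpow_of_nonpos hs hst.le ha₀
  have hts' : (t - s') ^ a ≤ (t - s) ^ a := rpow_le_rpow_of_nonpos hts (by linarith) ha₀
  have hsub := rpow_sub_rpow_le_of_neg_one_le hts (sub_le_sub_left hs's.le t) ha₁ hγ₀ hγ₁
  rw [sub_sub_sub_cancel_left] at hsub
  have hfirst : t ^ a * s ^ (-a) * ((t - s) ^ a - (t - s') ^ a)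
      ≤ (s - s') ^ γ * (t - s) ^ (a - γ) := by
    refine (mul_le_of_le_one_left (sub_nonneg.2 hts') ?_).trans hsub
    calc t ^ a * s ^ (-a) ≤ s ^ a * s ^ (-a) := by gcongr
      _ = 1 := hsa
  have hsecond : t ^ a * (s ^ (-a) - s' ^ (-a)) * (t - s') ^ a
      ≤ (s - s') ^ γ * (s' ^ (-γ) * (t - s) ^ a) := by
    calc t ^ a * (s ^ (-a) - s' ^ (-a)) * (t - s') ^ a
        ≤ s ^ a * ((s - s') ^ γ * s ^ (-a) * s' ^ (-γ)) * (t - s) ^ a := by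
          refine mul_le_mul (mul_le_mul hta ?_ ?_ (rpow_nonneg hs.le _)) hts'
            (rpow_nonneg (by linarith) _) (by positivity)
          · exact rpow_sub_rpow_le_of_le_one hs' hs's.le (by linarith) hγ₀ hγ₁
          · exact sub_nonneg.2 (rpow_le_rpow hs'.le hs's.le (by linarith))
      _ = (s - s') ^ γ * (s' ^ (-γ) * (t - s) ^ a) * (s ^ a * s ^ (-a)) := by ring
      _ = (s - s') ^ γ * (s' ^ (-γ) * (t - s) ^ a) := by rw [hsa, mul_one]
  linear_combination hfirst + hsecond

lemma KHcore_integral_sub_le (hs' : 0 < s') (hs's : s' < s) (hst : s < t) (ha : a < 0)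
    (hγ₀ : 0 ≤ γ) (haγ : -1 < a - γ) :
    s ^ (-a) * (∫ u in s..t, u ^ (a - 1) * (u - s) ^ a)
        - s' ^ (-a) * ∫ u in s'..t, u ^ (a - 1) * (u - s') ^ a
      ≤ (1 / (a + 1) - 1 / a + (1 / (a - γ + 1) - 1 / a)) * (s - s') ^ γ * (s ^ a * s' ^ (-γ)) := by
  have hs : 0 < s := hs'.trans hs's
  have hγ₁ : γ ≤ 1 := by linarith
  set I := ∫ u in s..t, u ^ (a - 1) * (u - s) ^ a
  set I' := ∫ u in s'..t, u ^ (a - 1) * (u - s') ^ a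
  have hI := integral_rpow_mul_rpow_sub_le hs hst.le ha (by linarith : -1 < a) ha.le
  have hJ := integral_rpow_mul_rpow_sub_le hs hst.le ha haγ (by linarith)
  have hII' := integral_rpow_mul_rpow_sub_sub_le hs' hs's hst hγ₀ hγ₁ haγ
  have hs'a : s' ^ (-a) ≤ s' ^ (-γ) * s ^ (γ - a) := by
    rw [show -a = -γ + (γ - a) by ring, rpow_add hs']
    gcongr
    linarith
  have hpow₁ : s ^ (-a) * s ^ (a + a) = s ^ a := by rw [← rpow_add hs]; ring_nf
  have hpow₂ : s ^ (γ - a) * s ^ (a + (a - γ)) = s ^ a := by rw [← rpow_add hs]; ring_nf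
  have hKJ : 0 ≤ 1 / (a - γ + 1) - 1 / a := by
    linarith [one_div_pos.2 (by linarith : 0 < a - γ + 1), one_div_neg.2 ha]
  have hsub := rpow_sub_rpow_le_of_le_one hs' hs's.le (b := -a) (by linarith) hγ₀ hγ₁
  have hfirst : (s ^ (-a) - s' ^ (-a)) * I
      ≤ (1 / (a + 1) - 1 / a) * (s - s') ^ γ * (s ^ a * s' ^ (-γ)) := by
    calc (s ^ (-a) - s' ^ (-a)) * I
        ≤ ((s - s') ^ γ * s ^ (-a) * s' ^ (-γ)) * ((1 / (a + 1) - 1 / a) * s ^ (a + a)) := by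
          refine mul_le_mul hsub hI (integral_rpow_mul_rpow_sub_nonneg hs hst.le) (by positivity)
      _ = (1 / (a + 1) - 1 / a) * (s - s') ^ γ * (s ^ a * s' ^ (-γ)) := by
          rw [← hpow₁]; ring
  have hsecond : s' ^ (-a) * (I - I')
      ≤ (1 / (a - γ + 1) - 1 / a) * (s - s') ^ γ * (s ^ a * s' ^ (-γ)) := by
    calc s' ^ (-a) * (I - I')
        ≤ (s' ^ (-γ) * s ^ (γ - a))
            * ((s - s') ^ γ * ((1 / (a - γ + 1) - 1 / a) * s ^ (a + (a - γ)))) := by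
          refine (mul_le_mul_of_nonneg_left (hII'.trans ?_) (rpow_nonneg hs'.le _)).trans
            (mul_le_mul_of_nonneg_right hs'a (by positivity))
          exact mul_le_mul_of_nonneg_left hJ (rpow_nonneg (sub_nonneg.2 hs's.le) _)
      _ = (1 / (a - γ + 1) - 1 / a) * (s - s') ^ γ * (s ^ a * s' ^ (-γ)) := by
          rw [← hpow₂]; ring
  linear_combination hfirst + hsecond

lemma KHcore_sub_KHcore_le_monomials (hs' : 0 < s') (hs's : s' < s) (hst : s < t) (ha : a < 0)
    (hγ₀ : 0 ≤ γ) (haγ : -1 < a - γ) :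
    KHcore a t s - KHcore a t s'
      ≤ (s - s') ^ γ * ((t - s) ^ (a - γ) + s' ^ (-γ) * (t - s) ^ a
        - a * (1 / (a + 1) - 1 / a + (1 / (a - γ + 1) - 1 / a)) * (s ^ a * s' ^ (-γ))) := by
  have hboundary := KHcore_boundary_sub_le hs' hs's hst (by linarith) ha.le hγ₀ (by linarith)
  have hintegral := mul_le_mul_of_nonneg_left (KHcore_integral_sub_le hs' hs's hst ha hγ₀ haγ)
    (neg_nonneg.2 ha.le)
  unfold KHcore
  linear_combination hboundary + hintegral

lemma KHcore_sub_KHcore_le (hs' : 0 < s') (hs's : s' < s) (hst : s < t) (htT : t ≤ T)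
    (ha : a < 0) (hγ₀ : 0 ≤ γ) (haγ : -1 < a - γ) :
    KHcore a t s - KHcore a t s'
      ≤ (2 - a * (1 / (a + 1) - 1 / a + (1 / (a - γ + 1) - 1 / a))) * T ^ (3 * γ - a)
        * ((s - s') ^ γ / (s * s') ^ γ * s ^ (a - γ) * (t - s) ^ (a - γ)) := by
  have hs : 0 < s := hs'.trans hs's
  have hts : 0 < t - s := sub_pos.2 hst
  have hsT : s ≤ T := by linarith
  have hs'T : s' ≤ T := by linarith
  have htsT : t - s ≤ T := by linarith
  have hM : (s - s') ^ γ / (s * s') ^ γ * s ^ (a - γ) * (t - s) ^ (a - γ)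
      = (s - s') ^ γ * (s ^ (a - 2 * γ) * s' ^ (-γ) * (t - s) ^ (a - γ)) := by
    have hpow : s ^ (a - 2 * γ) = s ^ (a - γ) / s ^ γ := by rw [← rpow_sub hs]; ring_nf
    rw [mul_rpow hs.le hs'.le, rpow_neg hs'.le, hpow]
    ring
  set M := s ^ (a - 2 * γ) * s' ^ (-γ) * (t - s) ^ (a - γ)
  set K := 1 / (a + 1) - 1 / a + (1 / (a - γ + 1) - 1 / a)
  have hK : 0 ≤ K := by
    linarith [one_div_pos.2 (by linarith : 0 < a + 1),
      one_div_pos.2 (by linarith : 0 < a - γ + 1), one_div_neg.2 ha]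
  have hm₁ : (t - s) ^ (a - γ) ≤ T ^ (3 * γ - a) * M := by
    simpa only [rpow_zero, one_mul] using rpow_mul_rpow_mul_rpow_le hs hs' hts hsT hs'T htsT
      (e₁ := 0) (e₂ := 0) (by linarith) (by linarith) le_rfl (by ring)
  have hm₂ : s' ^ (-γ) * (t - s) ^ a ≤ T ^ (3 * γ - a) * M := by
    simpa only [rpow_zero, one_mul] using rpow_mul_rpow_mul_rpow_le hs hs' hts hsT hs'T htsT
      (e₁ := 0) (by linarith) le_rfl (by linarith) (by ring)
  have hm₃ : s ^ a * s' ^ (-γ) ≤ T ^ (3 * γ - a) * M := by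
    simpa only [rpow_zero, mul_one] using rpow_mul_rpow_mul_rpow_le hs hs' hts hsT hs'T htsT
      (e₃ := 0) (by linarith) le_rfl (by linarith) (by ring)
  rw [hM]
  calc KHcore a t s - KHcore a t s'
      ≤ (s - s') ^ γ
          * ((t - s) ^ (a - γ) + s' ^ (-γ) * (t - s) ^ a - a * K * (s ^ a * s' ^ (-γ))) :=
        KHcore_sub_KHcore_le_monomials hs' hs's hst ha hγ₀ haγ
    _ ≤ (s - s') ^ γ * (T ^ (3 * γ - a) * M + T ^ (3 * γ - a) * M
          - a * K * (T ^ (3 * γ - a) * M)) := by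
        have h₃ := mul_le_mul_of_nonneg_left hm₃ (mul_nonneg (neg_nonneg.2 ha.le) hK)
        gcongr ?_ * ?_
        linarith
    _ = (2 - a * K) * T ^ (3 * γ - a) * ((s - s') ^ γ * M) := by ring

end Increment

theorem statement18_general (H T γ : ℝ) (hH : H ∈ Set.Ioo (0 : ℝ) (1 / 2))
    (hγ : γ ∈ Set.Ioo (0 : ℝ) H) :
    ∃ C > (0 : ℝ), ∀ t₀' t₀ t : ℝ, 0 < t₀' → t₀' < t₀ → t₀ < t → t ≤ T →
      KH H t t₀ - KH H t t₀' ≤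
        C * ((t₀ - t₀') ^ γ / (t₀ * t₀') ^ γ) * t₀ ^ (H - 1 / 2 - γ)
          * (t - t₀) ^ (H - 1 / 2 - γ) := by
  set a := H - 1 / 2 with ha
  set C₀ := (2 - a * (1 / (a + 1) - 1 / a + (1 / (a - γ + 1) - 1 / a))) * T ^ (3 * γ - a)
  refine ⟨max (cH H * C₀) 1, lt_max_of_lt_right one_pos, fun t₀' t₀ t h₀' h₀ ht htT => ?_⟩
  have ht₀ : 0 < t₀ := h₀'.trans h₀
  have hbound := KHcore_sub_KHcore_le h₀' h₀ ht htT (a := a) (by linarith [hH.2]) hγ.1.le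
    (by linarith [hγ.2])
  calc KH H t t₀ - KH H t t₀' = cH H * (KHcore a t t₀ - KHcore a t t₀') := by
        rw [KH_eq_cH_mul_KHcore ht₀ ht, KH_eq_cH_mul_KHcore h₀' (h₀.trans ht), mul_sub]
    _ ≤ cH H * C₀ * ((t₀ - t₀') ^ γ / (t₀ * t₀') ^ γ * t₀ ^ (a - γ) * (t - t₀) ^ (a - γ)) := by
        rw [mul_assoc]
        exact mul_le_mul_of_nonneg_left hbound (sqrt_nonneg _)
    _ ≤ max (cH H * C₀) 1
          * ((t₀ - t₀') ^ γ / (t₀ * t₀') ^ γ * t₀ ^ (a - γ) * (t - t₀) ^ (a - γ)) := by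
        gcongr
        exact le_max_left _ _
    _ = _ := by ring

/-- For `H ∈ (0,1/2)`, `T > 0`, `γ ∈ (0,H)` there is a constant
`C = C_{H,T} > 0` (depending only on `H`, `T` and `γ`) such that for all
`0 < t₀' < t₀ < t ≤ T`,
`K_H(t,t₀) - K_H(t,t₀') ≤ C ((t₀-t₀')^γ/(t₀t₀')^γ) t₀^{H-1/2-γ} (t-t₀)^{H-1/2-γ}`. -/
theorem statement18 (H T γ : ℝ) (hH : H ∈ Set.Ioo (0 : ℝ) (1 / 2)) (hT : 0 < T)
    (hγ : γ ∈ Set.Ioo (0 : ℝ) H) :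
    ∃ C > (0 : ℝ), ∀ t₀' t₀ t : ℝ, 0 < t₀' → t₀' < t₀ → t₀ < t → t ≤ T →
      KH H t t₀ - KH H t t₀' ≤
        C * ((t₀ - t₀') ^ γ / (t₀ * t₀') ^ γ) * t₀ ^ (H - 1 / 2 - γ)
          * (t - t₀) ^ (H - 1 / 2 - γ) :=
  statement18_general H T γ hH hγ
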